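/- Let p ≥ 1, let z be a standard Gaussian vector in ℝᵖ and x = z/‖z‖. Let U be a symmetric p×p real matrix, let ΔΩ' be symmetric with spectral norm ε = ‖ΔΩ'‖₂ < 1, and set Ω' = I + ΔΩ' (positive definite). Then for every even natural number ν ≥ 2, E[(xᵀUx)ᵛ]/(1+ε)ᵛ ≤ E[((xᵀUx)/(xᵀΩ'x))ᵛ] ≤ E[(xᵀUx)ᵛ]/(1−ε)ᵛ; moreover the same two-sided bound holds for every natural number ν ≥ 1 when U is positive semidefinite. -/

import Mathlib

open MeasureTheory ProbabilityTheory Matrix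

/-- The standard Gaussian measure `N(0, I_p)` on `ℝᵖ`, as the `p`-fold product of
standard normal distributions. -/
noncomputable def stdGaussian (p : ℕ) : Measure (Fin p → ℝ) :=
  Measure.pi fun _ => gaussianReal 0 1

/-- Euclidean norm of a vector in `ℝᵖ`. -/
noncomputable def euclNorm {p : ℕ} (v : Fin p → ℝ) : ℝ := Real.sqrt (v ⬝ᵥ v)

/-- Frobenius norm of a real matrix. -/
noncomputable def frobNorm {p : ℕ} (A : Matrix (Fin p) (Fin p) ℝ) : ℝ :=
  Real.sqrt (Matrix.trace (Aᵀ * A))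

/-- Spectral (L2 operator) norm of a real matrix. -/
noncomputable def specNorm {p : ℕ} (A : Matrix (Fin p) (Fin p) ℝ) : ℝ :=
  sSup {r : ℝ | ∃ v : Fin p → ℝ, euclNorm v = 1 ∧ r = euclNorm (A.mulVec v)}

/-- Minimal eigenvalue of a symmetric real matrix (via the Rayleigh quotient). -/
noncomputable def lambdaMin {p : ℕ} (A : Matrix (Fin p) (Fin p) ℝ) : ℝ :=
  sInf {r : ℝ | ∃ v : Fin p → ℝ, euclNorm v = 1 ∧ r = v ⬝ᵥ A.mulVec v}

/-- Maximal eigenvalue of a symmetric real matrix (via the Rayleigh quotient). -/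
noncomputable def lambdaMax {p : ℕ} (A : Matrix (Fin p) (Fin p) ℝ) : ℝ :=
  sSup {r : ℝ | ∃ v : Fin p → ℝ, euclNorm v = 1 ∧ r = v ⬝ᵥ A.mulVec v}

/-- Normalization of a vector to the unit sphere: `z ↦ z / ‖z‖`. -/
noncomputable def unitize {p : ℕ} (z : Fin p → ℝ) : Fin p → ℝ := (euclNorm z)⁻¹ • z

/-- `cos φ₀ = Tr Ω / (√p ‖Ω‖_F)`: the cosine of the angle between `Ω` and the identity. -/
noncomputable def cosAngleId {p : ℕ} (Ω : Matrix (Fin p) (Fin p) ℝ) : ℝ :=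
  Matrix.trace Ω / (Real.sqrt p * frobNorm Ω)


/-!
On the unit sphere `xᵀ(I + ΔΩ')x = 1 + xᵀΔΩ'x` lies in `[1 - ε, 1 + ε]`, because the Rayleigh
quotient of `ΔΩ'` is bounded by its spectral norm. Hence, wherever `(xᵀUx)ᵛ ≥ 0` (for `ν` even,
or for `U` positive semidefinite), the `ν`-th power of the ratio is squeezed pointwise between
`(xᵀUx)ᵛ / (1 + ε)ᵛ` and `(xᵀUx)ᵛ / (1 - ε)ᵛ`, and integrating gives the claim. All integrands
are bounded (by powers of the Frobenius norm of `U`), so all the integrals exist.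
-/

open Set

section EuclideanNorm

variable {p : ℕ}

lemma dotProduct_self_nonneg (v : Fin p → ℝ) : 0 ≤ v ⬝ᵥ v :=
  Finset.sum_nonneg fun i _ => mul_self_nonneg (v i)

lemma euclNorm_nonneg (v : Fin p → ℝ) : 0 ≤ euclNorm v := Real.sqrt_nonneg _

lemma sq_euclNorm (v : Fin p → ℝ) : euclNorm v ^ 2 = v ⬝ᵥ v :=
  Real.sq_sqrt (dotProduct_self_nonneg v)

lemma euclNorm_smul (c : ℝ) (v : Fin p → ℝ) : euclNorm (c • v) = |c| * euclNorm v := by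
  rw [euclNorm, euclNorm, smul_dotProduct, dotProduct_smul, smul_eq_mul, smul_eq_mul, ← mul_assoc,
    Real.sqrt_mul (mul_self_nonneg c), Real.sqrt_mul_self_eq_abs]

lemma abs_dotProduct_le (v w : Fin p → ℝ) : |v ⬝ᵥ w| ≤ euclNorm v * euclNorm w := by
  rw [← Real.sqrt_sq_eq_abs, euclNorm, euclNorm, ← Real.sqrt_mul (dotProduct_self_nonneg v)]
  refine Real.sqrt_le_sqrt ?_
  simpa only [dotProduct, pow_two] using Finset.sum_mul_sq_le_sq_mul_sq Finset.univ v w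

lemma euclNorm_mulVec_le (A : Matrix (Fin p) (Fin p) ℝ) (v : Fin p → ℝ) :
    euclNorm (A *ᵥ v) ≤ frobNorm A * euclNorm v := by
  have hrow : ∀ i, (A *ᵥ v) i * (A *ᵥ v) i ≤ (A i ⬝ᵥ A i) * (v ⬝ᵥ v) := fun i => by
    simpa only [mulVec, dotProduct, pow_two] using Finset.sum_mul_sq_le_sq_mul_sq Finset.univ (A i) v
  have htrace : trace (Aᵀ * A) = ∑ i, A i ⬝ᵥ A i := by
    simp only [trace, diag, mul_apply, transpose_apply, dotProduct]
    exact Finset.sum_comm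
  rw [frobNorm, euclNorm, euclNorm, ← Real.sqrt_mul (htrace ▸ Finset.sum_nonneg fun i _ =>
    dotProduct_self_nonneg (A i)), htrace, Finset.sum_mul]
  exact Real.sqrt_le_sqrt (Finset.sum_le_sum fun i _ => hrow i)

lemma euclNorm_unitize_of_ne_zero {z : Fin p → ℝ} (hz : euclNorm z ≠ 0) :
    euclNorm (unitize z) = 1 := by
  rw [unitize, euclNorm_smul, abs_inv, abs_of_nonneg (euclNorm_nonneg z), inv_mul_cancel₀ hz]

lemma unitize_of_euclNorm_eq_zero {z : Fin p → ℝ} (hz : euclNorm z = 0) : unitize z = 0 := by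
  rw [unitize, hz, _root_.inv_zero, zero_smul]

lemma euclNorm_unitize_le_one (z : Fin p → ℝ) : euclNorm (unitize z) ≤ 1 := by
  by_cases hz : euclNorm z = 0
  · simp [unitize_of_euclNorm_eq_zero hz, euclNorm]
  · exact (euclNorm_unitize_of_ne_zero hz).le

lemma measurable_unitize : Measurable (unitize (p := p)) := by
  have hnorm : Continuous (euclNorm (p := p)) := by unfold euclNorm; fun_prop
  exact hnorm.measurable.inv.smul measurable_id

end EuclideanNorm

section QuadraticForm

variable {p : ℕ} (A : Matrix (Fin p) (Fin p) ℝ)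

lemma bddAbove_euclNorm_mulVec_unit :
    BddAbove {r : ℝ | ∃ v : Fin p → ℝ, euclNorm v = 1 ∧ r = euclNorm (A *ᵥ v)} := by
  refine ⟨frobNorm A, ?_⟩
  rintro _ ⟨v, hv, rfl⟩
  simpa [hv] using euclNorm_mulVec_le A v

lemma frobNorm_nonneg : 0 ≤ frobNorm A := Real.sqrt_nonneg _

lemma specNorm_nonneg : 0 ≤ specNorm A :=
  Real.sSup_nonneg (by rintro _ ⟨v, -, rfl⟩; exact euclNorm_nonneg _)

lemma abs_dotProduct_mulVec_le_specNorm {x : Fin p → ℝ} (hx : euclNorm x = 1) :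
    |x ⬝ᵥ A *ᵥ x| ≤ specNorm A :=
  calc |x ⬝ᵥ A *ᵥ x| ≤ euclNorm (A *ᵥ x) := by simpa [hx] using abs_dotProduct_le x (A *ᵥ x)
    _ ≤ specNorm A := le_csSup (bddAbove_euclNorm_mulVec_unit A) ⟨x, hx, rfl⟩

lemma abs_dotProduct_mulVec_le_frobNorm {x : Fin p → ℝ} (hx : euclNorm x ≤ 1) :
    |x ⬝ᵥ A *ᵥ x| ≤ frobNorm A :=
  calc |x ⬝ᵥ A *ᵥ x| ≤ euclNorm x * (frobNorm A * euclNorm x) :=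
        (abs_dotProduct_le x _).trans
          (mul_le_mul_of_nonneg_left (euclNorm_mulVec_le A x) (euclNorm_nonneg x))
    _ ≤ 1 * (frobNorm A * 1) := by
        have := frobNorm_nonneg A
        have := euclNorm_nonneg x
        gcongr
    _ = frobNorm A := by ring

lemma dotProduct_one_add_mulVec_mem_Icc {x : Fin p → ℝ} (hx : euclNorm x = 1) :
    x ⬝ᵥ (1 + A) *ᵥ x ∈ Icc (1 - specNorm A) (1 + specNorm A) := by
  have hxx : x ⬝ᵥ x = 1 := by rw [← sq_euclNorm, hx, one_pow]
  rw [add_mulVec, one_mulVec, dotProduct_add, hxx]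
  have := abs_le.mp (abs_dotProduct_mulVec_le_specNorm A hx)
  constructor <;> linarith [this.1, this.2]

lemma measurable_dotProduct_mulVec_unitize :
    Measurable fun z : Fin p → ℝ => unitize z ⬝ᵥ A *ᵥ unitize z := by
  have hquad : Continuous fun x : Fin p → ℝ => x ⬝ᵥ A *ᵥ x := by fun_prop
  exact hquad.measurable.comp measurable_unitize

lemma integrable_dotProduct_mulVec_unitize_pow (μ : MeasureTheory.Measure (Fin p → ℝ))
    [IsFiniteMeasure μ] (ν : ℕ) :
    Integrable (fun z => (unitize z ⬝ᵥ A *ᵥ unitize z) ^ ν) μ := by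
  refine Integrable.mono' (integrable_const (frobNorm A ^ ν))
    ((measurable_dotProduct_mulVec_unitize A).pow_const ν).aestronglyMeasurable
    (ae_of_all _ fun z => ?_)
  rw [Real.norm_eq_abs, abs_pow]
  exact pow_le_pow_left₀ (abs_nonneg _)
    (abs_dotProduct_mulVec_le_frobNorm A (euclNorm_unitize_le_one z)) ν

end QuadraticForm

section Sandwich

variable {ν : ℕ} {lo hi : ℝ}

lemma pow_div_mem_Icc {a d : ℝ} (hlo : 0 < lo) (ha : 0 ≤ a ^ ν)
    (hd : a ≠ 0 → d ∈ Icc lo hi) : (a / d) ^ ν ∈ Icc (a ^ ν / hi ^ ν) (a ^ ν / lo ^ ν) := by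
  by_cases ha0 : a = 0
  · subst ha0
    rcases Nat.eq_zero_or_pos ν with rfl | hν
    · simp
    · simp [zero_pow hν.ne']
  obtain ⟨hdlo, hdhi⟩ := hd ha0
  have hd0 : 0 < d := hlo.trans_le hdlo
  rw [div_pow]
  exact ⟨div_le_div_of_nonneg_left ha (pow_pos hd0 ν) (pow_le_pow_left₀ hd0.le hdhi ν),
    div_le_div_of_nonneg_left ha (pow_pos hlo ν) (pow_le_pow_left₀ hlo.le hdlo ν)⟩

lemma integral_pow_div_mem_Icc {α : Type*} [MeasurableSpace α] {μ : Measure α} {a d : α → ℝ}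
    (hlo : 0 < lo) (hlohi : lo ≤ hi) (hint : Integrable (fun z => a z ^ ν) μ)
    (hmeas : AEStronglyMeasurable (fun z => (a z / d z) ^ ν) μ)
    (ha : ∀ᵐ z ∂μ, 0 ≤ a z ^ ν) (hd : ∀ᵐ z ∂μ, a z ≠ 0 → d z ∈ Icc lo hi) :
    ∫ z, (a z / d z) ^ ν ∂μ ∈ Icc ((∫ z, a z ^ ν ∂μ) / hi ^ ν) ((∫ z, a z ^ ν ∂μ) / lo ^ ν) := by
  have hbound : ∀ᵐ z ∂μ, (a z / d z) ^ ν ∈ Icc (a z ^ ν / hi ^ ν) (a z ^ ν / lo ^ ν) := by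
    filter_upwards [ha, hd] with z haz hdz using pow_div_mem_Icc hlo haz hdz
  have hint' : Integrable (fun z => (a z / d z) ^ ν) μ := by
    refine Integrable.mono' (hint.div_const (lo ^ ν)) hmeas ?_
    filter_upwards [ha, hbound] with z haz hz
    have hlow : 0 ≤ a z ^ ν / hi ^ ν := div_nonneg haz (pow_nonneg (by linarith) ν)
    rw [Real.norm_eq_abs, abs_of_nonneg (hlow.trans hz.1)]
    exact hz.2
  rw [← integral_div, ← integral_div]
  exact ⟨integral_mono_ae (hint.div_const _) hint' (hbound.mono fun z hz => hz.1),
    integral_mono_ae hint' (hint.div_const _) (hbound.mono fun z hz => hz.2)⟩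

end Sandwich

lemma integral_ratio_pow_mem_Icc {p : ℕ} (U ΔΩ : Matrix (Fin p) (Fin p) ℝ)
    (hε : specNorm ΔΩ < 1) {ν : ℕ}
    (hnonneg : ∀ z : Fin p → ℝ, 0 ≤ (unitize z ⬝ᵥ U *ᵥ unitize z) ^ ν) :
    ∫ z, ((unitize z ⬝ᵥ U *ᵥ unitize z) / (unitize z ⬝ᵥ (1 + ΔΩ) *ᵥ unitize z)) ^ ν
        ∂(stdGaussian p) ∈
      Icc ((∫ z, (unitize z ⬝ᵥ U *ᵥ unitize z) ^ ν ∂(stdGaussian p)) / (1 + specNorm ΔΩ) ^ ν)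
        ((∫ z, (unitize z ⬝ᵥ U *ᵥ unitize z) ^ ν ∂(stdGaussian p)) / (1 - specNorm ΔΩ) ^ ν) := by
  have : IsProbabilityMeasure (stdGaussian p) := by unfold _root_.stdGaussian; infer_instance
  have hε0 := specNorm_nonneg ΔΩ
  refine integral_pow_div_mem_Icc (by linarith) (by linarith)
    (integrable_dotProduct_mulVec_unitize_pow U _ ν)
    (((measurable_dotProduct_mulVec_unitize U).div
      (measurable_dotProduct_mulVec_unitize (1 + ΔΩ))).pow_const ν).aestronglyMeasurable
    (ae_of_all _ hnonneg) (ae_of_all _ fun z hz => ?_)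
  -- `unitize 0 = 0` (junk `0⁻¹ = 0`), so the denominator vanishes at `z = 0`; so does the numerator
  refine dotProduct_one_add_mulVec_mem_Icc ΔΩ (euclNorm_unitize_of_ne_zero fun h0 => hz ?_)
  simp [unitize_of_euclNorm_eq_zero h0]

theorem ratio_moment_sandwich_general (p : ℕ)
    (U ΔΩ : Matrix (Fin p) (Fin p) ℝ)
    (hε : specNorm ΔΩ < 1) :
    (∀ ν : ℕ, 2 ≤ ν → Even ν →
      (∫ z, (unitize z ⬝ᵥ U.mulVec (unitize z)) ^ ν ∂(stdGaussian p)) / (1 + specNorm ΔΩ) ^ ν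
        ≤ ∫ z, ((unitize z ⬝ᵥ U.mulVec (unitize z))
            / (unitize z ⬝ᵥ (1 + ΔΩ).mulVec (unitize z))) ^ ν ∂(stdGaussian p)
      ∧ ∫ z, ((unitize z ⬝ᵥ U.mulVec (unitize z))
            / (unitize z ⬝ᵥ (1 + ΔΩ).mulVec (unitize z))) ^ ν ∂(stdGaussian p)
        ≤ (∫ z, (unitize z ⬝ᵥ U.mulVec (unitize z)) ^ ν ∂(stdGaussian p))
            / (1 - specNorm ΔΩ) ^ ν)
    ∧ (U.PosSemidef → ∀ ν : ℕ, 1 ≤ ν →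
      (∫ z, (unitize z ⬝ᵥ U.mulVec (unitize z)) ^ ν ∂(stdGaussian p)) / (1 + specNorm ΔΩ) ^ ν
        ≤ ∫ z, ((unitize z ⬝ᵥ U.mulVec (unitize z))
            / (unitize z ⬝ᵥ (1 + ΔΩ).mulVec (unitize z))) ^ ν ∂(stdGaussian p)
      ∧ ∫ z, ((unitize z ⬝ᵥ U.mulVec (unitize z))
            / (unitize z ⬝ᵥ (1 + ΔΩ).mulVec (unitize z))) ^ ν ∂(stdGaussian p)
        ≤ (∫ z, (unitize z ⬝ᵥ U.mulVec (unitize z)) ^ ν ∂(stdGaussian p))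
            / (1 - specNorm ΔΩ) ^ ν) :=
  ⟨fun _ _ hν => integral_ratio_pow_mem_Icc U ΔΩ hε fun _ => hν.pow_nonneg _,
    fun hU _ _ => integral_ratio_pow_mem_Icc U ΔΩ hε fun z =>
      pow_nonneg (hU.dotProduct_mulVec_nonneg (unitize z)) _⟩

/-- For `x = z/‖z‖` with `z` standard Gaussian in `ℝᵖ`, symmetric `U`, symmetric
`ΔΩ'` with `ε = ‖ΔΩ'‖₂ < 1` and `Ω' = I + ΔΩ'`: for every even `ν ≥ 2`,
`E[(xᵀUx)ᵛ]/(1+ε)ᵛ ≤ E[((xᵀUx)/(xᵀΩ'x))ᵛ] ≤ E[(xᵀUx)ᵛ]/(1−ε)ᵛ`; moreover the same two-sided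
bound holds for every `ν ≥ 1` when `U` is positive semidefinite. -/
theorem ratio_moment_sandwich (p : ℕ) (hp : 1 ≤ p)
    (U ΔΩ : Matrix (Fin p) (Fin p) ℝ) (hU : U.IsSymm) (hΔ : ΔΩ.IsSymm)
    (hε : specNorm ΔΩ < 1) :
    (∀ ν : ℕ, 2 ≤ ν → Even ν →
      (∫ z, (unitize z ⬝ᵥ U.mulVec (unitize z)) ^ ν ∂(stdGaussian p)) / (1 + specNorm ΔΩ) ^ ν
        ≤ ∫ z, ((unitize z ⬝ᵥ U.mulVec (unitize z))
            / (unitize z ⬝ᵥ (1 + ΔΩ).mulVec (unitize z))) ^ ν ∂(stdGaussian p)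
      ∧ ∫ z, ((unitize z ⬝ᵥ U.mulVec (unitize z))
            / (unitize z ⬝ᵥ (1 + ΔΩ).mulVec (unitize z))) ^ ν ∂(stdGaussian p)
        ≤ (∫ z, (unitize z ⬝ᵥ U.mulVec (unitize z)) ^ ν ∂(stdGaussian p))
            / (1 - specNorm ΔΩ) ^ ν)
    ∧ (U.PosSemidef → ∀ ν : ℕ, 1 ≤ ν →
      (∫ z, (unitize z ⬝ᵥ U.mulVec (unitize z)) ^ ν ∂(stdGaussian p)) / (1 + specNorm ΔΩ) ^ ν
        ≤ ∫ z, ((unitize z ⬝ᵥ U.mulVec (unitize z))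
            / (unitize z ⬝ᵥ (1 + ΔΩ).mulVec (unitize z))) ^ ν ∂(stdGaussian p)
      ∧ ∫ z, ((unitize z ⬝ᵥ U.mulVec (unitize z))
            / (unitize z ⬝ᵥ (1 + ΔΩ).mulVec (unitize z))) ^ ν ∂(stdGaussian p)
        ≤ (∫ z, (unitize z ⬝ᵥ U.mulVec (unitize z)) ^ ν ∂(stdGaussian p))
            / (1 - specNorm ΔΩ) ^ ν) :=
  ratio_moment_sandwich_general p U ΔΩ hε
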